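/- arXiv:1808.03382 — 7 statements merged into one kernel-verified Lean document; each statement's English description precedes it below -/
import Mathlib

section
/- Let ψ be a free N-partite state. Then for every index i the i-th reduced density matrix ρ⁽ⁱ⁾(ψ) is diagonal, i.e. ρ⁽ⁱ⁾(ψ)_{k l} = 0 whenever k ≠ l, and its diagonal entries are ρ⁽ⁱ⁾(ψ)_{k k} = ∑_{j ∈ supp(ψ), j i = k} |ψ j|². -/
open scoped BigOperators Classical

/-- The `i`-th reduced density matrix of an `N`-partite state `ψ`. -/
noncomputable def rdm {N : ℕ} {d : Fin N → ℕ} (ψ : (∀ i, Fin (d i)) → ℂ) (i : Fin N) :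
    Matrix (Fin (d i)) (Fin (d i)) ℂ :=
  fun k l => ∑ j : ∀ i', Fin (d i'),
    if j i = k then ψ j * (starRingEnd ℂ) (ψ (Function.update j i l)) else 0

/-- A state is free if any two distinct elements of its support differ in at least
two coordinates. -/
def IsFree {N : ℕ} {d : Fin N → ℕ} (ψ : (∀ i, Fin (d i)) → ℂ) : Prop :=
  ∀ j k : ∀ i, Fin (d i), ψ j ≠ 0 → ψ k ≠ 0 → j ≠ k →
    ∃ i₁ i₂ : Fin N, i₁ ≠ i₂ ∧ j i₁ ≠ k i₁ ∧ j i₂ ≠ k i₂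

section

variable {N : ℕ} {d : Fin N → ℕ} {ψ : (∀ i, Fin (d i)) → ℂ}

theorem IsFree.apply_update_eq_zero (hfree : IsFree ψ) {j : ∀ i, Fin (d i)} (hj : ψ j ≠ 0)
    {i : Fin N} {l : Fin (d i)} (hl : l ≠ j i) : ψ (Function.update j i l) = 0 := by
  by_contra hupd
  have hne : j ≠ Function.update j i l := fun h => hl (by simpa using (congrFun h i).symm)
  obtain ⟨i₁, i₂, h₁₂, h₁, h₂⟩ := hfree j _ hj hupd hne
  have eq_of_ne : ∀ m, j m ≠ Function.update j i l m → m = i := fun m hm => by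
    by_contra hmi
    exact hm (Function.update_of_ne hmi l j).symm
  exact h₁₂ ((eq_of_ne i₁ h₁).trans (eq_of_ne i₂ h₂).symm)

theorem IsFree.rdm_apply_of_ne (hfree : IsFree ψ) {i : Fin N} {k l : Fin (d i)} (hkl : k ≠ l) :
    rdm ψ i k l = 0 := by
  refine Finset.sum_eq_zero fun j _ => ?_
  split_ifs with hjk
  · by_cases hj : ψ j = 0
    · simp [hj]
    · rw [hfree.apply_update_eq_zero hj (hjk ▸ hkl.symm), map_zero, mul_zero]
  · rfl

theorem rdm_apply_self (i : Fin N) (k : Fin (d i)) :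
    rdm ψ i k k =
      ((∑ j : ∀ i', Fin (d i'), if j i = k then ‖ψ j‖ ^ 2 else 0 : ℝ) : ℂ) := by
  rw [rdm, Complex.ofReal_sum]
  refine Finset.sum_congr rfl fun j _ => ?_
  split_ifs with hjk
  · rw [← hjk, Function.update_eq_self, Complex.mul_conj, Complex.normSq_eq_norm_sq,
      Complex.ofReal_pow]
  · simp

end

theorem rdm_of_free_diagonal_general {N : ℕ} {d : Fin N → ℕ}
    (ψ : (∀ i, Fin (d i)) → ℂ) (hfree : IsFree ψ) (i : Fin N) :
    (∀ k l : Fin (d i), k ≠ l → rdm ψ i k l = 0) ∧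
    (∀ k : Fin (d i),
      rdm ψ i k k =
        ((∑ j : ∀ i', Fin (d i'),
            if ψ j ≠ 0 ∧ j i = k then ‖ψ j‖ ^ 2 else 0 : ℝ) : ℂ)) := by
  refine ⟨fun k l hkl => hfree.rdm_apply_of_ne hkl, fun k => ?_⟩
  rw [rdm_apply_self]
  congr 1
  refine Finset.sum_congr rfl fun j _ => ?_
  by_cases hj : ψ j = 0 <;> simp [hj]

/-- For a free state all reduced density matrices are diagonal, with diagonal entries
given by the sums of `|ψ j|²` over the support elements with the corresponding
`i`-th coordinate. -/
theorem rdm_of_free_diagonal {N : ℕ} {d : Fin N → ℕ} (hd : ∀ i, 1 ≤ d i)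
    (ψ : (∀ i, Fin (d i)) → ℂ) (hfree : IsFree ψ) (i : Fin N) :
    (∀ k l : Fin (d i), k ≠ l → rdm ψ i k l = 0) ∧
    (∀ k : Fin (d i),
      rdm ψ i k k =
        ((∑ j : ∀ i', Fin (d i'),
            if ψ j ≠ 0 ∧ j i = k then ‖ψ j‖ ^ 2 else 0 : ℝ) : ℂ)) :=
  rdm_of_free_diagonal_general ψ hfree i
end

section
/- Let ψ be a nonzero N-partite state. Then supp(ψ) is a singleton if and only if for every tuple t = (t₁, …, t_N), where each tᵢ : Fin (d i) → ℂ satisfies |tᵢ(a)| = 1 for all a and ∏_a tᵢ(a) = 1 (i.e. each tᵢ is the diagonal of a diagonal special unitary matrix), there exists c ∈ ℂ such that (∏ᵢ tᵢ(j i)) · ψ(j) = c · ψ(j) for all multi-indices j. In other words, the projective fixed points of the diagonal torus of SU(d₁) × ⋯ × SU(d_N) acting by local phases are exactly the computational basis states. -/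
/-!
If the support of `ψ` is the single multi-index `j₀`, a phase tuple `t` acts on `ψ` as the scalar
`∏ i, tᵢ (j₀ i)`. Conversely, if `j ≠ k` both lie in the support, pick a site `i₀` with
`j i₀ ≠ k i₀` and act at that site alone by `diag(i, -i)` on the levels `j i₀, k i₀` (and
trivially on all other levels): this is special unitary, yet multiplies `ψ j` by `i` and `ψ k`
by `-i`, so no single scalar `c` describes its action.
-/

open Complex

namespace Pi

variable {ι : Type*} [DecidableEq ι]

lemma forall_mulSingle {M : ι → Type*} [∀ i, One (M i)] {P : ∀ i, M i → Prop}
    (h₁ : ∀ i, P i 1) {i₀ : ι} {x : M i₀} (hx : P i₀ x) : ∀ i, P i (mulSingle i₀ x i) :=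
  fun i => by
    by_cases hi : i = i₀
    · subst hi
      rwa [mulSingle_eq_same]
    · rw [mulSingle_eq_of_ne hi]
      exact h₁ i

lemma prod_mulSingle_apply [Fintype ι] {α : ι → Type*} {β : Type*} [CommMonoid β] (i₀ : ι)
    (f : α i₀ → β) (j : ∀ i, α i) :
    ∏ i, mulSingle (M := fun i => α i → β) i₀ f i (j i) = f (j i₀) := by
  rw [Finset.prod_eq_single i₀ (fun i _ hi => by rw [mulSingle_eq_of_ne hi]; rfl) (by simp),
    mulSingle_eq_same]

end Pi

section PhaseFlip

variable {α : Type*} [DecidableEq α]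

def phaseFlip (b₀ b₁ : α) : α → ℂ :=
  Pi.mulSingle b₀ I * Pi.mulSingle b₁ (-I)

lemma norm_phaseFlip (b₀ b₁ a : α) : ‖phaseFlip b₀ b₁ a‖ = 1 := by
  have unit_norm (b : α) {z : ℂ} (hz : ‖z‖ = 1) : ‖Pi.mulSingle (M := fun _ : α => ℂ) b z a‖ = 1 :=
    Pi.forall_mulSingle (P := fun _ (w : ℂ) => ‖w‖ = 1) (fun _ => norm_one) hz a
  rw [phaseFlip, Pi.mul_apply, norm_mul, unit_norm b₀ norm_I, unit_norm b₁ (by simp), one_mul]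

lemma prod_phaseFlip [Fintype α] (b₀ b₁ : α) : ∏ a, phaseFlip b₀ b₁ a = 1 := by
  simp [phaseFlip, Finset.prod_mul_distrib]

lemma phaseFlip_apply_left {b₀ b₁ : α} (h : b₀ ≠ b₁) : phaseFlip b₀ b₁ b₀ = I := by
  simp [phaseFlip, Pi.mulSingle_eq_of_ne h]

lemma phaseFlip_apply_right {b₀ b₁ : α} (h : b₀ ≠ b₁) : phaseFlip b₀ b₁ b₁ = -I := by
  simp [phaseFlip, Pi.mulSingle_eq_of_ne h.symm]

end PhaseFlip

section LocalPhases

variable {ι : Type*} [Fintype ι] {α : ι → Type*} [∀ i, Fintype (α i)]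

def IsTorusFixed (ψ : (∀ i, α i) → ℂ) : Prop :=
  ∀ t : ∀ i, α i → ℂ, (∀ i a, ‖t i a‖ = 1) → (∀ i, ∏ a, t i a = 1) →
    ∃ c : ℂ, ∀ j, (∏ i, t i (j i)) * ψ j = c * ψ j

lemma isTorusFixed_of_support_subset {ψ : (∀ i, α i) → ℂ} {j₀ : ∀ i, α i}
    (hψ : {j | ψ j ≠ 0} ⊆ {j₀}) : IsTorusFixed ψ := by
  intro t _ _
  refine ⟨∏ i, t i (j₀ i), fun j => ?_⟩
  by_cases hj : ψ j = 0
  · simp [hj]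
  · rw [show j = j₀ from hψ hj]

lemma IsTorusFixed.eq_of_ne_zero {ψ : (∀ i, α i) → ℂ} (hψ : IsTorusFixed ψ) {j k : ∀ i, α i}
    (hj : ψ j ≠ 0) (hk : ψ k ≠ 0) : j = k := by
  classical
  by_contra hne
  obtain ⟨i₀, hi₀⟩ := Function.ne_iff.mp hne
  set t := Pi.mulSingle (M := fun i => α i → ℂ) i₀ (phaseFlip (j i₀) (k i₀))
  have ht_norm : ∀ i a, ‖t i a‖ = 1 :=
    Pi.forall_mulSingle (P := fun i (u : α i → ℂ) => ∀ a, ‖u a‖ = 1) (by simp) (norm_phaseFlip _ _)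
  have ht_prod : ∀ i, ∏ a, t i a = 1 :=
    Pi.forall_mulSingle (P := fun i (u : α i → ℂ) => ∏ a, u a = 1) (by simp) (prod_phaseFlip _ _)
  obtain ⟨c, hc⟩ := hψ t ht_norm ht_prod
  have hcj : I = c := by
    have := hc j
    rw [Pi.prod_mulSingle_apply, phaseFlip_apply_left hi₀] at this
    exact mul_right_cancel₀ hj this
  have hck : -I = c := by
    have := hc k
    rw [Pi.prod_mulSingle_apply, phaseFlip_apply_right hi₀] at this
    exact mul_right_cancel₀ hk this
  exact I_ne_zero (CharZero.eq_neg_self_iff.mp (hcj.trans hck.symm))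

end LocalPhases

theorem support_singleton_iff_torus_fixed_general {N : ℕ} {d : Fin N → ℕ}
    (ψ : (∀ i, Fin (d i)) → ℂ) (hψ : ψ ≠ 0) :
    (∃ j₀ : ∀ i, Fin (d i), {j | ψ j ≠ 0} = {j₀}) ↔
      ∀ t : ∀ i, Fin (d i) → ℂ,
        (∀ i, ∀ a : Fin (d i), ‖t i a‖ = 1) →
        (∀ i, ∏ a : Fin (d i), t i a = 1) →
        ∃ c : ℂ, ∀ j : ∀ i, Fin (d i), (∏ i, t i (j i)) * ψ j = c * ψ j := by
  refine ⟨fun ⟨j₀, hsupp⟩ => isTorusFixed_of_support_subset hsupp.subset, fun hfix => ?_⟩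
  obtain ⟨j₀, hj₀⟩ := Function.ne_iff.mp hψ
  exact ⟨j₀, Set.eq_singleton_iff_unique_mem.mpr
    ⟨hj₀, fun j hj => IsTorusFixed.eq_of_ne_zero hfix hj hj₀⟩⟩

/-- A nonzero multipartite state has singleton support (i.e. is a computational basis
state up to scale) if and only if it is a projective fixed point of the action of the
diagonal torus of `SU(d₁) × ⋯ × SU(d_N)` by local phases. -/
theorem support_singleton_iff_torus_fixed {N : ℕ} {d : Fin N → ℕ} (hd : ∀ i, 1 ≤ d i)
    (ψ : (∀ i, Fin (d i)) → ℂ) (hψ : ψ ≠ 0) :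
    (∃ j₀ : ∀ i, Fin (d i), {j | ψ j ≠ 0} = {j₀}) ↔
      ∀ t : ∀ i, Fin (d i) → ℂ,
        (∀ i, ∀ a : Fin (d i), ‖t i a‖ = 1) →
        (∀ i, ∏ a : Fin (d i), t i a = 1) →
        ∃ c : ℂ, ∀ j : ∀ i, Fin (d i), (∏ i, t i (j i)) * ψ j = c * ψ j :=
  support_singleton_iff_torus_fixed_general ψ hψ
end

section
/- Let ψ be a normalized free N-partite state and let k ∈ supp(ψ). Then the standard basis state e_k (defined by e_k(j) = 1 if j = k and e_k(j) = 0 otherwise) lies in the closure of the SLOCC cone of ψ. -/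
open scoped BigOperators

/-- The Kronecker/tensor product action of a tuple of local special linear matrices. -/
noncomputable def sloccAct {N : ℕ} {d : Fin N → ℕ}
    (g : ∀ i, Matrix.SpecialLinearGroup (Fin (d i)) ℂ)
    (ψ : (∀ i, Fin (d i)) → ℂ) : (∀ i, Fin (d i)) → ℂ :=
  fun j => ∑ m : ∀ i, Fin (d i),
    (∏ i, (g i : Matrix (Fin (d i)) (Fin (d i)) ℂ) (j i) (m i)) * ψ m

/-- The SLOCC cone of a state `ψ`. -/
def sloccCone {N : ℕ} {d : Fin N → ℕ} (ψ : (∀ i, Fin (d i)) → ℂ) :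
    Set ((∀ i, Fin (d i)) → ℂ) :=
  {φ | ∃ (c : ℂ) (g : ∀ i, Matrix.SpecialLinearGroup (Fin (d i)) ℂ),
    φ = c • sloccAct g ψ}

/-!
The diagonal torus of `SL(d₁) × ⋯ × SL(d_N)` already suffices. Scaling the `k i`-th basis
vector of the `i`-th factor by `t^{-(dᵢ-1)}` and all others by `t`, and rescaling the result by
`∏ᵢ t^{dᵢ-1} / ψ k`, multiplies `ψ j` by `t^{E j} / ψ k`, where `E j = ∑_{jᵢ ≠ kᵢ} dᵢ` vanishes
exactly at `j = k`. Letting `t → 0` leaves `e_k`.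
-/

noncomputable def peakWeight {n : ℕ} (k : Fin n) (t : ℂ) (m : Fin n) : ℂ :=
  if m = k then (t ^ (n - 1))⁻¹ else t

lemma prod_peakWeight {n : ℕ} (k : Fin n) {t : ℂ} (ht : t ≠ 0) :
    ∏ m, peakWeight k t m = 1 := by
  unfold peakWeight
  rw [← Finset.mul_prod_erase _ _ (Finset.mem_univ k), if_pos rfl,
    Finset.prod_congr rfl fun m hm => if_neg (Finset.ne_of_mem_erase hm), Finset.prod_const,
    Finset.card_erase_of_mem (Finset.mem_univ k), Finset.card_univ, Fintype.card_fin]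
  exact inv_mul_cancel₀ (pow_ne_zero _ ht)

lemma pow_mul_peakWeight {n : ℕ} (k m : Fin n) {t : ℂ} (ht : t ≠ 0) :
    t ^ (n - 1) * peakWeight k t m = t ^ (if m = k then 0 else n) := by
  unfold peakWeight
  split_ifs
  · exact mul_inv_cancel₀ (pow_ne_zero _ ht)
  · rw [← pow_succ, Nat.sub_add_cancel (Fin.pos m)]

noncomputable def peakSL {n : ℕ} (k : Fin n) {t : ℂ} (ht : t ≠ 0) :
    Matrix.SpecialLinearGroup (Fin n) ℂ :=
  ⟨Matrix.diagonal (peakWeight k t), by rw [Matrix.det_diagonal, prod_peakWeight k ht]⟩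

section

variable {N : ℕ} {d : Fin N → ℕ}

lemma sloccAct_of_diagonal (g : ∀ i, Matrix.SpecialLinearGroup (Fin (d i)) ℂ)
    (a : ∀ i, Fin (d i) → ℂ) (hg : ∀ i, (g i : Matrix (Fin (d i)) (Fin (d i)) ℂ) =
      Matrix.diagonal (a i))
    (ψ : (∀ i, Fin (d i)) → ℂ) (j : ∀ i, Fin (d i)) :
    sloccAct g ψ j = (∏ i, a i (j i)) * ψ j := by
  rw [sloccAct, Finset.sum_eq_single j]
  · simp [hg]
  · intro m _ hm
    obtain ⟨i, hi⟩ := Function.ne_iff.mp hm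
    rw [Finset.prod_eq_zero (Finset.mem_univ i)
      (by rw [hg, Matrix.diagonal_apply_ne _ (Ne.symm hi)]), zero_mul]
  · simp

def peakExponent (k j : ∀ i, Fin (d i)) : ℕ :=
  ∑ i, if j i = k i then 0 else d i

lemma peakExponent_self (k : ∀ i, Fin (d i)) : peakExponent k k = 0 := by
  simp [peakExponent]

lemma peakExponent_ne_zero {k j : ∀ i, Fin (d i)} (h : j ≠ k) : peakExponent k j ≠ 0 := by
  obtain ⟨i, hi⟩ := Function.ne_iff.mp h
  intro h0
  have := Finset.sum_eq_zero_iff.mp h0 i (Finset.mem_univ i)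
  rw [if_neg hi] at this
  exact (Fin.pos (k i)).ne' this

lemma peakScaling_mem_sloccCone (ψ : (∀ i, Fin (d i)) → ℂ) {k : ∀ i, Fin (d i)}
    {t : ℂ} (ht : t ≠ 0) :
    (fun j => t ^ peakExponent k j * (ψ j / ψ k)) ∈ sloccCone ψ := by
  refine ⟨(∏ i, t ^ (d i - 1)) / ψ k, fun i => peakSL (k i) ht, ?_⟩
  funext j
  rw [Pi.smul_apply, sloccAct_of_diagonal _ _ (fun i => rfl), smul_eq_mul, peakExponent,
    ← Finset.prod_pow_eq_pow_sum,
    ← Finset.prod_congr rfl fun i _ => pow_mul_peakWeight (k i) (j i) ht,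
    Finset.prod_mul_distrib]
  ring

end

theorem basis_mem_closure_sloccCone_general {N : ℕ} {d : Fin N → ℕ}
    (ψ : (∀ i, Fin (d i)) → ℂ)
    (k : ∀ i, Fin (d i)) (hk : ψ k ≠ 0) :
    (fun j => if j = k then (1 : ℂ) else 0) ∈ closure (sloccCone ψ) := by
  have hcont : Continuous fun t : ℂ => fun j => t ^ peakExponent k j * (ψ j / ψ k) := by
    fun_prop
  have hlimit : (fun j => (0 : ℂ) ^ peakExponent k j * (ψ j / ψ k)) =
      fun j => if j = k then (1 : ℂ) else 0 := by
    funext j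
    by_cases hj : j = k
    · subst hj
      simp [peakExponent_self, hk]
    · rw [zero_pow (peakExponent_ne_zero hj), zero_mul, if_neg hj]
  rw [← hlimit]
  refine mem_closure_of_tendsto
    ((hcont.tendsto 0).mono_left (nhdsWithin_le_nhds (s := {0}ᶜ))) ?_
  filter_upwards [self_mem_nhdsWithin] with t ht using peakScaling_mem_sloccCone ψ ht

/-- For a normalized free state `ψ` and any `k` in its support, the standard basis
state `e_k` lies in the closure of the SLOCC cone of `ψ`. -/
theorem basis_mem_closure_sloccCone {N : ℕ} {d : Fin N → ℕ} (hd : ∀ i, 1 ≤ d i)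
    (ψ : (∀ i, Fin (d i)) → ℂ)
    (hnorm : ∑ j : ∀ i, Fin (d i), ‖ψ j‖ ^ 2 = 1)
    (hfree : IsFree ψ) (k : ∀ i, Fin (d i)) (hk : ψ k ≠ 0) :
    (fun j => if j = k then (1 : ℂ) else 0) ∈ closure (sloccCone ψ) :=
  basis_mem_closure_sloccCone_general ψ k hk
end

section
/- Let W₃ : Fin 2 × Fin 2 × Fin 3 → ℂ be the state with W₃(0,0,0) = W₃(0,1,1) = W₃(1,1,2) = 1 and all other coefficients zero. Let ψ be any normalized state in the closure of the SLOCC cone of W₃ under SL(2,ℂ) × SL(2,ℂ) × SL(3,ℂ), and let λ₁, λ₂, λ₃ be the largest eigenvalues of the reduced density matrices ρ⁽¹⁾(ψ), ρ⁽²⁾(ψ), ρ⁽³⁾(ψ) respectively. Then λ₂ + λ₃ ≥ 1 and λ₁ + λ₃ ≥ 1. -/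
/-!
Every state in the SLOCC orbit of `W₃` is annihilated by a product vector `u ⊗ v` on the first two
parties: `W₃` itself is annihilated by `e₁ ⊗ e₀`, and the contraction is covariant. With `u`, `v`
normalized this is a closed condition, as the unit sphere is compact, so it passes to the closure.

For such a `ψ` and each `c`, let `φ_c = ∑_b v_b ψ(·, b, c) ∈ ℂ²`. Testing `ρ⁽²⁾` on the unit vector
orthogonal to `v̄` gives `λ₂ ≥ 1 - ∑_c ‖φ_c‖²`. Since `u ⬝ φ_c = 0`, Lagrange's identity in `ℂ²` gives
`‖φ_c‖ = |u^⊥ ⬝ φ_c| = |(A z)_c|`, where `A : ℂ² ⊗ ℂ² → ℂ³` is `ψ` read as a matrix and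
`z = u^⊥ ⊗ v` is a unit vector. As `ρ⁽³⁾ = A A*`, its top eigenvalue is at least `‖A z‖²`, so
`λ₃ ≥ ∑_c ‖φ_c‖²`. Exchanging the first two parties gives the other inequality.
-/

open scoped BigOperators

/-- The largest real eigenvalue of a (Hermitian) complex matrix. -/
noncomputable def lmax {n : ℕ} (M : Matrix (Fin n) (Fin n) ℂ) : ℝ :=
  sSup {r : ℝ | Module.End.HasEigenvalue (Matrix.mulVecLin M) ((r : ℂ))}

/-- First reduced density matrix of a `2 × 2 × 3` state. -/
noncomputable def rdm1 (ψ : Fin 2 × Fin 2 × Fin 3 → ℂ) : Matrix (Fin 2) (Fin 2) ℂ :=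
  fun k l => ∑ b : Fin 2, ∑ c : Fin 3, ψ (k, b, c) * (starRingEnd ℂ) (ψ (l, b, c))

/-- Second reduced density matrix of a `2 × 2 × 3` state. -/
noncomputable def rdm2 (ψ : Fin 2 × Fin 2 × Fin 3 → ℂ) : Matrix (Fin 2) (Fin 2) ℂ :=
  fun k l => ∑ a : Fin 2, ∑ c : Fin 3, ψ (a, k, c) * (starRingEnd ℂ) (ψ (a, l, c))

/-- Third reduced density matrix of a `2 × 2 × 3` state. -/
noncomputable def rdm3 (ψ : Fin 2 × Fin 2 × Fin 3 → ℂ) : Matrix (Fin 3) (Fin 3) ℂ :=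
  fun k l => ∑ a : Fin 2, ∑ b : Fin 2, ψ (a, b, k) * (starRingEnd ℂ) (ψ (a, b, l))

/-- The `W₃` state `|000⟩ + |011⟩ + |112⟩` of the `2 × 2 × 3` system. -/
noncomputable def W3 : Fin 2 × Fin 2 × Fin 3 → ℂ :=
  fun j => if j = (0, 0, 0) ∨ j = (0, 1, 1) ∨ j = (1, 1, 2) then 1 else 0

/-- The tensor product action of `SL(2,ℂ) × SL(2,ℂ) × SL(3,ℂ)` on `2 × 2 × 3` states. -/
noncomputable def act223 (g₁ g₂ : Matrix.SpecialLinearGroup (Fin 2) ℂ)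
    (g₃ : Matrix.SpecialLinearGroup (Fin 3) ℂ)
    (ψ : Fin 2 × Fin 2 × Fin 3 → ℂ) : Fin 2 × Fin 2 × Fin 3 → ℂ :=
  fun j => ∑ m : Fin 2 × Fin 2 × Fin 3,
    (g₁ : Matrix (Fin 2) (Fin 2) ℂ) j.1 m.1 *
      (g₂ : Matrix (Fin 2) (Fin 2) ℂ) j.2.1 m.2.1 *
        (g₃ : Matrix (Fin 3) (Fin 3) ℂ) j.2.2 m.2.2 * ψ m

/-- The SLOCC cone of a `2 × 2 × 3` state. -/
def cone223 (ψ : Fin 2 × Fin 2 × Fin 3 → ℂ) : Set (Fin 2 × Fin 2 × Fin 3 → ℂ) :=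
  {φ | ∃ (c : ℂ) (g₁ g₂ : Matrix.SpecialLinearGroup (Fin 2) ℂ)
        (g₃ : Matrix.SpecialLinearGroup (Fin 3) ℂ), φ = c • act223 g₁ g₂ g₃ ψ}

open Matrix
open scoped ComplexOrder

section Spectral

variable {n : ℕ} {M : Matrix (Fin n) (Fin n) ℂ}

theorem setOf_hasEigenvalue_mulVecLin_eq_spectrum (M : Matrix (Fin n) (Fin n) ℂ) :
    {r : ℝ | Module.End.HasEigenvalue (mulVecLin M) (r : ℂ)} = spectrum ℝ M := by
  ext r
  rw [Set.mem_ofPred_eq, Module.End.hasEigenvalue_iff_mem_spectrum, ← toLin'_apply',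
    spectrum_toLin']
  exact spectrum.algebraMap_mem_iff ℂ (R := ℝ) (A := Matrix (Fin n) (Fin n) ℂ)

theorem le_lmax_of_mem_spectrum {r : ℝ} (hr : r ∈ spectrum ℝ M) : r ≤ lmax M := by
  rw [lmax, setOf_hasEigenvalue_mulVecLin_eq_spectrum]
  exact le_csSup finite_real_spectrum.bddAbove hr

theorem Matrix.PosSemidef.lmax_nonneg (hM : M.PosSemidef) : 0 ≤ lmax M := by
  rw [lmax, setOf_hasEigenvalue_mulVecLin_eq_spectrum]
  refine Real.sSup_nonneg fun r hr => ?_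
  rw [hM.1.spectrum_real_eq_range_eigenvalues] at hr
  obtain ⟨i, rfl⟩ := hr
  exact hM.eigenvalues_nonneg i

theorem star_dotProduct_self_eq_sum_norm_sq {ι : Type*} [Fintype ι] (x : ι → ℂ) :
    star x ⬝ᵥ x = ((∑ i, ‖x i‖ ^ 2 : ℝ) : ℂ) := by
  simp [dotProduct, mul_comm, Complex.mul_conj']

open scoped MatrixOrder in
theorem Matrix.IsHermitian.re_star_dotProduct_mulVec_le_lmax (hM : M.IsHermitian)
    (x : Fin n → ℂ) : (star x ⬝ᵥ M *ᵥ x).re ≤ lmax M * ∑ i, ‖x i‖ ^ 2 := by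
  have hle : (algebraMap ℝ _ (lmax M) - M).PosSemidef := by
    rw [← Matrix.le_iff]
    exact (le_algebraMap_iff_spectrum_le (R := ℝ) hM).2 fun r hr => le_lmax_of_mem_spectrum hr
  have := hle.re_dotProduct_nonneg x
  rw [sub_mulVec, dotProduct_sub, Algebra.algebraMap_eq_smul_one, smul_mulVec, one_mulVec,
    dotProduct_smul, star_dotProduct_self_eq_sum_norm_sq] at this
  simp only [RCLike.re_to_complex, Complex.sub_re, Complex.real_smul, Complex.re_ofReal_mul,
    Complex.ofReal_re] at this
  linarith

end Spectral

theorem norm_dotProduct_sq_le {R ι : Type*} [SeminormedRing R] [Fintype ι] (x y : ι → R) :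
    ‖x ⬝ᵥ y‖ ^ 2 ≤ (∑ i, ‖x i‖ ^ 2) * ∑ i, ‖y i‖ ^ 2 := by
  have h : ‖x ⬝ᵥ y‖ ≤ ∑ i, ‖x i‖ * ‖y i‖ :=
    (norm_sum_le _ _).trans (Finset.sum_le_sum fun i _ => norm_mul_le _ _)
  exact (pow_le_pow_left₀ (norm_nonneg _) h 2).trans (Finset.sum_mul_sq_le_sq_mul_sq _ _ _)

/-- For `∑ i, ‖x i‖ ^ 2 = 1`, the vectors `star x` and `star (perp x)` form an orthonormal basis
of `ℂ²`. -/
def perp (x : Fin 2 → ℂ) : Fin 2 → ℂ := ![star (x 1), -star (x 0)]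

theorem sum_norm_sq_perp (x : Fin 2 → ℂ) : ∑ i, ‖perp x i‖ ^ 2 = ∑ i, ‖x i‖ ^ 2 := by
  simp [perp, Fin.sum_univ_two, add_comm]

theorem norm_dotProduct_sq_add_norm_perp_dotProduct_sq (x p : Fin 2 → ℂ) :
    ‖x ⬝ᵥ p‖ ^ 2 + ‖perp x ⬝ᵥ p‖ ^ 2 = (∑ i, ‖x i‖ ^ 2) * ∑ i, ‖p i‖ ^ 2 := by
  apply Complex.ofReal_injective
  push_cast
  simp only [← Complex.mul_conj', dotProduct, perp, Fin.sum_univ_two, map_add, map_mul, map_neg,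
    Matrix.cons_val_zero, Matrix.cons_val_one, Complex.star_def, Complex.conj_conj]
  ring

section Gram

variable {n : ℕ} {ι : Type*} [Fintype ι]

theorem re_star_dotProduct_mul_conjTranspose_mulVec (A : Matrix (Fin n) ι ℂ) (x : Fin n → ℂ) :
    (star x ⬝ᵥ (A * Aᴴ) *ᵥ x).re = ∑ i, ‖(star x ᵥ* A) i‖ ^ 2 := by
  rw [← mulVec_mulVec, dotProduct_mulVec, ← star_star x, ← star_vecMul, star_star,
    dotProduct_comm, star_dotProduct_self_eq_sum_norm_sq, Complex.ofReal_re]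

theorem sum_norm_sq_mulVec_le_lmax_mul_conjTranspose (A : Matrix (Fin n) ι ℂ) (z : ι → ℂ) :
    ∑ k, ‖(A *ᵥ z) k‖ ^ 2 ≤ lmax (A * Aᴴ) * ∑ i, ‖z i‖ ^ 2 := by
  set y := A *ᵥ z
  set s := ∑ k, ‖y k‖ ^ 2
  have hs : (star y ᵥ* A) ⬝ᵥ z = (s : ℂ) := by
    rw [← dotProduct_mulVec, star_dotProduct_self_eq_sum_norm_sq]
  have hquad : s ^ 2 ≤ lmax (A * Aᴴ) * s * ∑ i, ‖z i‖ ^ 2 := calc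
    s ^ 2 = ‖(star y ᵥ* A) ⬝ᵥ z‖ ^ 2 := by
      rw [hs, Complex.norm_real, Real.norm_eq_abs, sq_abs]
    _ ≤ (∑ i, ‖(star y ᵥ* A) i‖ ^ 2) * ∑ i, ‖z i‖ ^ 2 := norm_dotProduct_sq_le _ _
    _ ≤ lmax (A * Aᴴ) * s * ∑ i, ‖z i‖ ^ 2 := by
      rw [← re_star_dotProduct_mul_conjTranspose_mulVec]
      gcongr
      exact (isHermitian_mul_conjTranspose_self A).re_star_dotProduct_mulVec_le_lmax y
  have hlmax := (posSemidef_self_mul_conjTranspose A).lmax_nonneg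
  have hs0 : 0 ≤ s := by positivity
  have hz0 : 0 ≤ ∑ i, ‖z i‖ ^ 2 := by positivity
  nlinarith [mul_nonneg hlmax hz0]

theorem sum_norm_sq_sub_norm_sq_vecMul_le_lmax_mul_conjTranspose (A : Matrix (Fin 2) ι ℂ)
    {x : Fin 2 → ℂ} (hx : ∑ i, ‖x i‖ ^ 2 = 1) :
    ∑ i, ∑ k, ‖A k i‖ ^ 2 - ∑ i, ‖(x ᵥ* A) i‖ ^ 2 ≤ lmax (A * Aᴴ) := by
  have hperp := (isHermitian_mul_conjTranspose_self A).re_star_dotProduct_mulVec_le_lmax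
    (star (perp x))
  rw [re_star_dotProduct_mul_conjTranspose_mulVec, star_star] at hperp
  simp only [Pi.star_apply, norm_star, sum_norm_sq_perp, hx, mul_one] at hperp
  have hcol : ∀ i, ‖(x ᵥ* A) i‖ ^ 2 + ‖(perp x ᵥ* A) i‖ ^ 2 = ∑ k, ‖A k i‖ ^ 2 := fun i => by
    rw [vecMul, vecMul, norm_dotProduct_sq_add_norm_perp_dotProduct_sq, hx, one_mul]
  simp only [← hcol, Finset.sum_add_distrib]
  linarith

end Gram

def flat2 (ψ : Fin 2 × Fin 2 × Fin 3 → ℂ) : Matrix (Fin 2) (Fin 2 × Fin 3) ℂ :=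
  of fun b ac => ψ (ac.1, b, ac.2)

def flat3 (ψ : Fin 2 × Fin 2 × Fin 3 → ℂ) : Matrix (Fin 3) (Fin 2 × Fin 2) ℂ :=
  of fun c ab => ψ (ab.1, ab.2, c)

theorem rdm2_eq_flat2_mul_conjTranspose (ψ : Fin 2 × Fin 2 × Fin 3 → ℂ) :
    rdm2 ψ = flat2 ψ * (flat2 ψ)ᴴ := by
  ext k l
  simp [rdm2, flat2, mul_apply, Fintype.sum_prod_type]

theorem rdm3_eq_flat3_mul_conjTranspose (ψ : Fin 2 × Fin 2 × Fin 3 → ℂ) :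
    rdm3 ψ = flat3 ψ * (flat3 ψ)ᴴ := by
  ext k l
  simp [rdm3, flat3, mul_apply, Fintype.sum_prod_type]

theorem sum_norm_sq_flat2 (ψ : Fin 2 × Fin 2 × Fin 3 → ℂ) :
    ∑ i, ∑ k, ‖flat2 ψ k i‖ ^ 2 = ∑ j, ‖ψ j‖ ^ 2 := by
  simp only [flat2, of_apply, Fintype.sum_prod_type]
  exact Finset.sum_congr rfl fun a _ => Finset.sum_comm

def contract12 (u v : Fin 2 → ℂ) (ψ : Fin 2 × Fin 2 × Fin 3 → ℂ) : Fin 3 → ℂ :=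
  fun c => ∑ a, ∑ b, u a * v b * ψ (a, b, c)

theorem sum_norm_sq_vecMul_flat2_eq_sum_norm_sq_flat3_mulVec {ψ : Fin 2 × Fin 2 × Fin 3 → ℂ}
    {u v : Fin 2 → ℂ} (hu : ∑ i, ‖u i‖ ^ 2 = 1) (h : contract12 u v ψ = 0) :
    ∑ i, ‖(v ᵥ* flat2 ψ) i‖ ^ 2 = ∑ c, ‖(flat3 ψ *ᵥ fun ab => perp u ab.1 * v ab.2) c‖ ^ 2 := by
  rw [Fintype.sum_prod_type, Finset.sum_comm]
  refine Finset.sum_congr rfl fun c _ => ?_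
  have hc := norm_dotProduct_sq_add_norm_perp_dotProduct_sq u fun a => (v ᵥ* flat2 ψ) (a, c)
  have h0 : u ⬝ᵥ (fun a => (v ᵥ* flat2 ψ) (a, c)) = contract12 u v ψ c := by
    simp [dotProduct, vecMul, flat2, contract12, Fin.sum_univ_two]
    ring
  have h1 : perp u ⬝ᵥ (fun a => (v ᵥ* flat2 ψ) (a, c)) =
      (flat3 ψ *ᵥ fun ab => perp u ab.1 * v ab.2) c := by
    simp [dotProduct, vecMul, mulVec, flat2, flat3, Fintype.sum_prod_type, Fin.sum_univ_two]
    ring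
  rw [h0, h, h1, hu, one_mul] at hc
  simpa using hc.symm

theorem one_le_lmax_rdm2_add_lmax_rdm3 {ψ : Fin 2 × Fin 2 × Fin 3 → ℂ}
    (hψ : ∑ j, ‖ψ j‖ ^ 2 = 1) {u v : Fin 2 → ℂ} (hu : ∑ i, ‖u i‖ ^ 2 = 1)
    (hv : ∑ i, ‖v i‖ ^ 2 = 1) (h : contract12 u v ψ = 0) :
    1 ≤ lmax (rdm2 ψ) + lmax (rdm3 ψ) := by
  have h2 := sum_norm_sq_sub_norm_sq_vecMul_le_lmax_mul_conjTranspose (flat2 ψ) hv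
  rw [sum_norm_sq_flat2, hψ, ← rdm2_eq_flat2_mul_conjTranspose,
    sum_norm_sq_vecMul_flat2_eq_sum_norm_sq_flat3_mulVec hu h] at h2
  have h3 := sum_norm_sq_mulVec_le_lmax_mul_conjTranspose (flat3 ψ)
    fun ab => perp u ab.1 * v ab.2
  have hz : ∑ ab : Fin 2 × Fin 2, ‖perp u ab.1 * v ab.2‖ ^ 2 = 1 := by
    simp only [Fintype.sum_prod_type, norm_mul, mul_pow, ← Finset.mul_sum, ← Finset.sum_mul,
      sum_norm_sq_perp, hu, hv, one_mul]
  rw [hz, mul_one, ← rdm3_eq_flat3_mul_conjTranspose] at h3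
  linarith

theorem isClosed_setOf_exists_mem_of_isCompact {X Y : Type*} [TopologicalSpace X]
    [TopologicalSpace Y] {K : Set Y} (hK : IsCompact K) {P : X → Y → Prop}
    (hP : IsClosed {p : X × Y | P p.1 p.2}) : IsClosed {x | ∃ y ∈ K, P x y} := by
  have : CompactSpace K := isCompact_iff_compactSpace.mp hK
  have hPK : IsClosed {p : X × K | P p.1 p.2} :=
    hP.preimage (continuous_fst.prodMk (continuous_subtype_val.comp continuous_snd))
  convert isClosedMap_fst_of_compactSpace _ hPK using 1
  ext x
  simp

/-- Normalizing `u` and `v` makes the parameter set compact, so that this set is closed. -/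
def annihilatedByProduct : Set (Fin 2 × Fin 2 × Fin 3 → ℂ) :=
  {ψ | ∃ uv ∈ Metric.sphere (0 : EuclideanSpace ℂ (Fin 2)) 1 ×ˢ
      Metric.sphere (0 : EuclideanSpace ℂ (Fin 2)) 1, contract12 uv.1 uv.2 ψ = 0}

theorem isClosed_annihilatedByProduct : IsClosed annihilatedByProduct := by
  refine isClosed_setOf_exists_mem_of_isCompact
    ((isCompact_sphere _ _).prod (isCompact_sphere _ _)) ?_
  refine isClosed_eq (continuous_pi fun c => ?_) continuous_const
  simp only [contract12]
  fun_prop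

theorem contract12_smul_smul (a b : ℂ) (u v : Fin 2 → ℂ) (ψ : Fin 2 × Fin 2 × Fin 3 → ℂ) :
    contract12 (a • u) (b • v) ψ = (a * b) • contract12 u v ψ := by
  ext c
  simp [contract12, Fin.sum_univ_two]
  ring

theorem mem_annihilatedByProduct_of_ne_zero {u v : Fin 2 → ℂ} (hu : u ≠ 0) (hv : v ≠ 0)
    {ψ : Fin 2 × Fin 2 × Fin 3 → ℂ} (h : contract12 u v ψ = 0) : ψ ∈ annihilatedByProduct := by
  have hu' : WithLp.toLp 2 u ≠ 0 := by simpa using hu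
  have hv' : WithLp.toLp 2 v ≠ 0 := by simpa using hv
  refine ⟨(‖WithLp.toLp 2 u‖⁻¹ • WithLp.toLp 2 u, ‖WithLp.toLp 2 v‖⁻¹ • WithLp.toLp 2 v),
    ⟨?_, ?_⟩, ?_⟩
  · rw [mem_sphere_zero_iff_norm, norm_smul, norm_inv, norm_norm,
      inv_mul_cancel₀ (norm_ne_zero_iff.2 hu')]
  · rw [mem_sphere_zero_iff_norm, norm_smul, norm_inv, norm_norm,
      inv_mul_cancel₀ (norm_ne_zero_iff.2 hv')]
  · simp only [WithLp.ofLp_smul, ← Complex.coe_smul, contract12_smul_smul, h, smul_zero]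

theorem contract12_smul (u v : Fin 2 → ℂ) (c : ℂ) (ψ : Fin 2 × Fin 2 × Fin 3 → ℂ) :
    contract12 u v (c • ψ) = c • contract12 u v ψ := by
  ext
  simp [contract12, Fin.sum_univ_two]
  ring

theorem contract12_act223 (u v : Fin 2 → ℂ) (g₁ g₂ : Matrix.SpecialLinearGroup (Fin 2) ℂ)
    (g₃ : Matrix.SpecialLinearGroup (Fin 3) ℂ) (ψ : Fin 2 × Fin 2 × Fin 3 → ℂ) :
    contract12 u v (act223 g₁ g₂ g₃ ψ) =
      (g₃ : Matrix (Fin 3) (Fin 3) ℂ) *ᵥ contract12 (u ᵥ* g₁) (v ᵥ* g₂) ψ := by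
  ext c
  simp only [contract12, act223, mulVec, vecMul, dotProduct, Fintype.sum_prod_type,
    Fin.sum_univ_two, Fin.sum_univ_three]
  ring

theorem Matrix.SpecialLinearGroup.inv_row_vecMul {R n : Type*} [CommRing R] [Fintype n]
    [DecidableEq n] (g : SpecialLinearGroup n R) (i : n) :
    ((g⁻¹ : SpecialLinearGroup n R) : Matrix n n R) i ᵥ* g = Pi.single i 1 := by
  rw [← mul_apply_eq_vecMul, ← SpecialLinearGroup.coe_mul, inv_mul_cancel,
    SpecialLinearGroup.coe_one]
  ext j
  exact one_eq_pi_single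

theorem contract12_single_W3 : contract12 (Pi.single 1 1) (Pi.single 0 1) W3 = 0 := by
  ext c
  simp [contract12, W3, Fin.sum_univ_two]

theorem cone223_W3_subset_annihilatedByProduct : cone223 W3 ⊆ annihilatedByProduct := by
  rintro _ ⟨c, g₁, g₂, g₃, rfl⟩
  have hrow {n : ℕ} (g : SpecialLinearGroup (Fin n) ℂ) (i : Fin n) :
      ((g⁻¹ : SpecialLinearGroup (Fin n) ℂ) : Matrix (Fin n) (Fin n) ℂ) i ≠ 0 := by
    intro h0
    simpa [h0] using congrFun (g.inv_row_vecMul i) i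
  refine mem_annihilatedByProduct_of_ne_zero (hrow g₁ 1) (hrow g₂ 0) ?_
  rw [contract12_smul, contract12_act223, g₁.inv_row_vecMul, g₂.inv_row_vecMul,
    contract12_single_W3, mulVec_zero, smul_zero]

def swap12 (ψ : Fin 2 × Fin 2 × Fin 3 → ℂ) : Fin 2 × Fin 2 × Fin 3 → ℂ :=
  fun j => ψ (j.2.1, j.1, j.2.2)

theorem sum_norm_sq_swap12 (ψ : Fin 2 × Fin 2 × Fin 3 → ℂ) :
    ∑ j, ‖swap12 ψ j‖ ^ 2 = ∑ j, ‖ψ j‖ ^ 2 := by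
  simp only [swap12, Fintype.sum_prod_type]
  exact Finset.sum_comm

theorem rdm2_swap12 (ψ : Fin 2 × Fin 2 × Fin 3 → ℂ) : rdm2 (swap12 ψ) = rdm1 ψ := rfl

theorem rdm3_swap12 (ψ : Fin 2 × Fin 2 × Fin 3 → ℂ) : rdm3 (swap12 ψ) = rdm3 ψ := by
  ext k l
  exact Finset.sum_comm

theorem contract12_swap12 (u v : Fin 2 → ℂ) (ψ : Fin 2 × Fin 2 × Fin 3 → ℂ) :
    contract12 v u (swap12 ψ) = contract12 u v ψ := by
  ext c
  simp only [contract12, swap12]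
  rw [Finset.sum_comm]
  simp only [mul_comm (v _)]

/-- Any normalized state in the SLOCC orbit closure of `W₃` satisfies
`λ₂ + λ₃ ≥ 1` and `λ₁ + λ₃ ≥ 1` for its maximal local eigenvalues. -/
theorem W3_eigenvalue_inequalities (ψ : Fin 2 × Fin 2 × Fin 3 → ℂ)
    (hnorm : ∑ j : Fin 2 × Fin 2 × Fin 3, ‖ψ j‖ ^ 2 = 1)
    (hmem : ψ ∈ closure (cone223 W3)) :
    1 ≤ lmax (rdm2 ψ) + lmax (rdm3 ψ) ∧ 1 ≤ lmax (rdm1 ψ) + lmax (rdm3 ψ) := by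
  obtain ⟨⟨u, v⟩, ⟨hu, hv⟩, h⟩ :=
    closure_minimal cone223_W3_subset_annihilatedByProduct isClosed_annihilatedByProduct hmem
  have hsum {x : EuclideanSpace ℂ (Fin 2)} (hx : x ∈ Metric.sphere 0 1) :
      ∑ i, ‖x i‖ ^ 2 = 1 := by
    rw [← EuclideanSpace.norm_sq_eq, mem_sphere_zero_iff_norm.1 hx, one_pow]
  refine ⟨one_le_lmax_rdm2_add_lmax_rdm3 hnorm (hsum hu) (hsum hv) h, ?_⟩
  rw [← rdm2_swap12, ← rdm3_swap12]
  exact one_le_lmax_rdm2_add_lmax_rdm3 ((sum_norm_sq_swap12 ψ).trans hnorm) (hsum hv) (hsum hu)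
    ((contract12_swap12 u v ψ).trans h)
end

section
/- In the 2 × 3 × 3 system define the states (writing e(j) for the standard basis state supported at j): ψ₀ = e(0,0,0) + e(1,1,1) + e(0,2,2) + e(1,2,2); ψ₁ = e(1,0,0) + e(0,1,0) + e(0,0,1) + e(1,2,2); ψ₂ = e(1,0,0) + e(0,1,0) + e(0,0,1) + e(0,2,2); ψ₃ = e(1,0,0) + e(0,1,0) + e(0,2,2); ψ₄ = e(1,0,0) + e(0,1,0) + e(0,0,1) + e(1,2,1) + e(1,1,2); ψ₅ = e(0,0,1) + e(0,1,0) + e(1,2,1) + e(1,1,2). Writing C(φ) for the closure of the SLOCC cone of φ, the following inclusions hold: C(ψ₃) ⊆ C(ψ₂) ⊆ C(ψ₁) ⊆ C(ψ₀) and C(ψ₅) ⊆ C(ψ₄) ⊆ C(ψ₀). -/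
set_option maxHeartbeats 1000000000

open scoped BigOperators

/-- The standard basis state of the `2 × 3 × 3` system supported at `j₀`. -/
noncomputable def e (j₀ : Fin 2 × Fin 3 × Fin 3) : Fin 2 × Fin 3 × Fin 3 → ℂ :=
  fun j => if j = j₀ then 1 else 0

/-- The tensor product action of `SL(2,ℂ) × SL(3,ℂ) × SL(3,ℂ)` on `2 × 3 × 3`
states. -/
noncomputable def act233 (g₁ : Matrix.SpecialLinearGroup (Fin 2) ℂ)
    (g₂ g₃ : Matrix.SpecialLinearGroup (Fin 3) ℂ)
    (ψ : Fin 2 × Fin 3 × Fin 3 → ℂ) : Fin 2 × Fin 3 × Fin 3 → ℂ :=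
  fun j => ∑ m : Fin 2 × Fin 3 × Fin 3,
    (g₁ : Matrix (Fin 2) (Fin 2) ℂ) j.1 m.1 *
      (g₂ : Matrix (Fin 3) (Fin 3) ℂ) j.2.1 m.2.1 *
        (g₃ : Matrix (Fin 3) (Fin 3) ℂ) j.2.2 m.2.2 * ψ m

/-- The closure of the SLOCC cone of a `2 × 3 × 3` state. -/
noncomputable def C (ψ : Fin 2 × Fin 3 × Fin 3 → ℂ) : Set (Fin 2 × Fin 3 × Fin 3 → ℂ) :=
  closure {φ | ∃ (c : ℂ) (g₁ : Matrix.SpecialLinearGroup (Fin 2) ℂ)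
    (g₂ g₃ : Matrix.SpecialLinearGroup (Fin 3) ℂ), φ = c • act233 g₁ g₂ g₃ ψ}

/-! ### Auxiliary infrastructure -/

/-- The (unclosed) SLOCC cone of a state. -/
def S0 (ψ : Fin 2 × Fin 3 × Fin 3 → ℂ) : Set (Fin 2 × Fin 3 × Fin 3 → ℂ) :=
  {φ | ∃ (c : ℂ) (g₁ : Matrix.SpecialLinearGroup (Fin 2) ℂ)
    (g₂ g₃ : Matrix.SpecialLinearGroup (Fin 3) ℂ), φ = c • act233 g₁ g₂ g₃ ψ}

lemma C_eq (ψ : Fin 2 × Fin 3 × Fin 3 → ℂ) : C ψ = closure (S0 ψ) := rfl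

lemma act233_smul (g₁ : Matrix.SpecialLinearGroup (Fin 2) ℂ)
    (g₂ g₃ : Matrix.SpecialLinearGroup (Fin 3) ℂ) (c : ℂ) (ψ : Fin 2 × Fin 3 × Fin 3 → ℂ) :
    act233 g₁ g₂ g₃ (c • ψ) = c • act233 g₁ g₂ g₃ ψ := by
  funext j
  simp only [act233, Pi.smul_apply, smul_eq_mul, Finset.mul_sum]
  exact Finset.sum_congr rfl fun m _ => by ring

lemma act233_act233 (g₁ h₁ : Matrix.SpecialLinearGroup (Fin 2) ℂ)
    (g₂ h₂ g₃ h₃ : Matrix.SpecialLinearGroup (Fin 3) ℂ) (ψ : Fin 2 × Fin 3 × Fin 3 → ℂ) :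
    act233 g₁ g₂ g₃ (act233 h₁ h₂ h₃ ψ) = act233 (g₁*h₁) (g₂*h₂) (g₃*h₃) ψ := by
  funext j
  simp only [act233, Matrix.SpecialLinearGroup.coe_mul, Matrix.mul_apply,
    Fintype.sum_prod_type, Fin.sum_univ_succ, Fin.sum_univ_zero]
  ring

lemma act233_cont (g₁ : Matrix.SpecialLinearGroup (Fin 2) ℂ)
    (g₂ g₃ : Matrix.SpecialLinearGroup (Fin 3) ℂ) : Continuous (act233 g₁ g₂ g₃) := by
  unfold act233
  fun_prop

lemma S0_stable {ψ x : Fin 2 × Fin 3 × Fin 3 → ℂ} (hx : x ∈ S0 ψ) (c : ℂ)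
    (g₁ : Matrix.SpecialLinearGroup (Fin 2) ℂ) (g₂ g₃ : Matrix.SpecialLinearGroup (Fin 3) ℂ) :
    c • act233 g₁ g₂ g₃ x ∈ S0 ψ := by
  obtain ⟨c', h₁, h₂, h₃, rfl⟩ := hx
  exact ⟨c * c', g₁ * h₁, g₂ * h₂, g₃ * h₃, by
    rw [act233_smul, smul_smul, act233_act233]⟩

lemma mem_C_stable {ψ φ : Fin 2 × Fin 3 × Fin 3 → ℂ} (hφ : φ ∈ C ψ) (c : ℂ)
    (g₁ : Matrix.SpecialLinearGroup (Fin 2) ℂ) (g₂ g₃ : Matrix.SpecialLinearGroup (Fin 3) ℂ) :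
    c • act233 g₁ g₂ g₃ φ ∈ C ψ := by
  have hT : Continuous (fun y : Fin 2 × Fin 3 × Fin 3 → ℂ => c • act233 g₁ g₂ g₃ y) :=
    (act233_cont g₁ g₂ g₃).const_smul c
  have himg : (fun y : Fin 2 × Fin 3 × Fin 3 → ℂ => c • act233 g₁ g₂ g₃ y) '' (S0 ψ) ⊆ S0 ψ := by
    rintro x ⟨y, hy, rfl⟩
    exact S0_stable hy c g₁ g₂ g₃
  have h1 : c • act233 g₁ g₂ g₃ φ ∈
      (fun y : Fin 2 × Fin 3 × Fin 3 → ℂ => c • act233 g₁ g₂ g₃ y) '' closure (S0 ψ) :=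
    Set.mem_image_of_mem _ hφ
  have h2 := (image_closure_subset_closure_image (s := S0 ψ) hT) h1
  exact closure_mono himg h2

lemma C_mono {ψ φ : Fin 2 × Fin 3 × Fin 3 → ℂ} (h : φ ∈ C ψ) : C φ ⊆ C ψ := by
  rw [C_eq]
  apply closure_minimal _ isClosed_closure
  rintro x ⟨c, g₁, g₂, g₃, rfl⟩
  exact mem_C_stable h c g₁ g₂ g₃

lemma mem_C_of_forms {ψ φ χ₁ χ₂ : Fin 2 × Fin 3 × Fin 3 → ℂ} {k₁ k₂ : ℕ}
    (hk₁ : k₁ ≠ 0) (hk₂ : k₂ ≠ 0)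
    (h : ∀ t : ℂ, t ≠ 0 → φ + t^k₁ • χ₁ + t^k₂ • χ₂ ∈ S0 ψ) : φ ∈ C ψ := by
  have hF : Continuous (fun t : ℂ => φ + t^k₁ • χ₁ + t^k₂ • χ₂) := by fun_prop
  have h0 : φ + (0:ℂ)^k₁ • χ₁ + (0:ℂ)^k₂ • χ₂ = φ := by
    simp [zero_pow hk₁, zero_pow hk₂]
  have hT : Filter.Tendsto (fun t : ℂ => φ + t^k₁ • χ₁ + t^k₂ • χ₂)
      (nhdsWithin 0 {0}ᶜ) (nhds φ) := by
    have := (hF.tendsto 0).mono_left (nhdsWithin_le_nhds (s := {0}ᶜ))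
    rwa [h0] at this
  rw [C_eq]
  refine mem_closure_of_tendsto hT ?_
  filter_upwards [self_mem_nhdsWithin] with t ht
  exact h t ht

/-! ### The explicit degenerations -/

lemma mem_32 : (e (1,0,0) + e (0,1,0) + e (0,2,2)) ∈
    C (e (1,0,0) + e (0,1,0) + e (0,0,1) + e (0,2,2)) := by
  refine mem_C_of_forms (k₁ := 6) (k₂ := 6) (χ₁ := e (0,0,1)) (χ₂ := 0)
    (by norm_num) (by norm_num) ?_
  intro t ht
  refine ⟨t⁻¹,
    ⟨!![t^3, 0; 0, t⁻¹^3], by simp [Matrix.det_fin_two]; field_simp; (try ring_nf); (try simp only [inv_pow, inv_zpow, ← zpow_natCast, ← zpow_neg, ← zpow_add₀ ht]); (try norm_num); (try ring)⟩,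
    ⟨!![t^4, 0, 0; 0, t⁻¹^2, 0; 0, 0, t⁻¹^2], by simp [Matrix.det_fin_three]; field_simp; (try ring_nf); (try simp only [inv_pow, inv_zpow, ← zpow_natCast, ← zpow_neg, ← zpow_add₀ ht]); (try norm_num); (try ring)⟩,
    ⟨!![1,0,0;0,1,0;0,0,1], by simp [Matrix.det_fin_three]⟩, ?_⟩
  funext j
  obtain ⟨j1, j2, j3⟩ := j
  fin_cases j1 <;> fin_cases j2 <;> fin_cases j3
  all_goals simp [act233, e, Fintype.sum_prod_type, Fin.sum_univ_two, Fin.sum_univ_three,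
    Prod.ext_iff, Matrix.cons_val_zero, Matrix.cons_val_one, Matrix.cons_val_two,
    Matrix.head_cons, Matrix.vecTail, Matrix.vecHead]
  all_goals try field_simp
  all_goals try ring_nf
  all_goals try simp only [inv_pow, inv_zpow, ← zpow_natCast, ← zpow_neg, ← zpow_add₀ ht]
  all_goals try norm_num
  all_goals try ring
  all_goals try tauto

lemma mem_21 : (e (1,0,0) + e (0,1,0) + e (0,0,1) + e (0,2,2)) ∈
    C (e (1,0,0) + e (0,1,0) + e (0,0,1) + e (1,2,2)) := by
  refine mem_C_of_forms (k₁ := 3) (k₂ := 3) (χ₁ := e (1,2,2)) (χ₂ := 0)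
    (by norm_num) (by norm_num) ?_
  intro t ht
  refine ⟨t,
    ⟨!![1, t⁻¹^3; 0, 1], by simp [Matrix.det_fin_two]⟩,
    ⟨!![t⁻¹, -t⁻¹^4, 0; 0, t⁻¹, 0; 0, 0, t^2], by simp [Matrix.det_fin_three]; field_simp; (try ring_nf); (try simp only [inv_pow, inv_zpow, ← zpow_natCast, ← zpow_neg, ← zpow_add₀ ht]); (try norm_num); (try ring)⟩,
    ⟨!![1,0,0;0,1,0;0,0,1], by simp [Matrix.det_fin_three]⟩, ?_⟩
  funext j
  obtain ⟨j1, j2, j3⟩ := j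
  fin_cases j1 <;> fin_cases j2 <;> fin_cases j3
  all_goals simp [act233, e, Fintype.sum_prod_type, Fin.sum_univ_two, Fin.sum_univ_three,
    Prod.ext_iff, Matrix.cons_val_zero, Matrix.cons_val_one, Matrix.cons_val_two,
    Matrix.head_cons, Matrix.vecTail, Matrix.vecHead]
  all_goals try field_simp
  all_goals try ring_nf
  all_goals try simp only [inv_pow, inv_zpow, ← zpow_natCast, ← zpow_neg, ← zpow_add₀ ht]
  all_goals try norm_num
  all_goals try ring
  all_goals try tauto

lemma mem_10 : (e (1,0,0) + e (0,1,0) + e (0,0,1) + e (1,2,2)) ∈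
    C (e (0,0,0) + e (1,1,1) + e (0,2,2) + e (1,2,2)) := by
  refine mem_C_of_forms (k₁ := 6) (k₂ := 12)
    (χ₁ := -(e (1,1,0) + e (1,0,1) + e (0,1,1))) (χ₂ := e (1,1,1))
    (by norm_num) (by norm_num) ?_
  intro t ht
  refine ⟨t,
    ⟨!![t⁻¹^3, -t⁻¹^3; 0, t^3], by simp [Matrix.det_fin_two]; field_simp; (try ring_nf); (try simp only [inv_pow, inv_zpow, ← zpow_natCast, ← zpow_neg, ← zpow_add₀ ht]); (try norm_num); (try ring)⟩,
    ⟨!![t⁻¹^2, t⁻¹^2, 0; 0, -t^4, 0; 0, 0, -t⁻¹^2], by simp [Matrix.det_fin_three]; field_simp; (try ring_nf); (try simp only [inv_pow, inv_zpow, ← zpow_natCast, ← zpow_neg, ← zpow_add₀ ht]); (try norm_num); (try ring)⟩,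
    ⟨!![t⁻¹^2, t⁻¹^2, 0; 0, -t^4, 0; 0, 0, -t⁻¹^2], by simp [Matrix.det_fin_three]; field_simp; (try ring_nf); (try simp only [inv_pow, inv_zpow, ← zpow_natCast, ← zpow_neg, ← zpow_add₀ ht]); (try norm_num); (try ring)⟩, ?_⟩
  funext j
  obtain ⟨j1, j2, j3⟩ := j
  fin_cases j1 <;> fin_cases j2 <;> fin_cases j3
  all_goals simp [act233, e, Fintype.sum_prod_type, Fin.sum_univ_two, Fin.sum_univ_three,
    Prod.ext_iff, Matrix.cons_val_zero, Matrix.cons_val_one, Matrix.cons_val_two,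
    Matrix.head_cons, Matrix.vecTail, Matrix.vecHead]
  all_goals try field_simp
  all_goals try ring_nf
  all_goals try simp only [inv_pow, inv_zpow, ← zpow_natCast, ← zpow_neg, ← zpow_add₀ ht]
  all_goals try norm_num
  all_goals try ring
  all_goals try tauto

lemma mem_54 : (e (0,0,1) + e (0,1,0) + e (1,2,1) + e (1,1,2)) ∈
    C (e (1,0,0) + e (0,1,0) + e (0,0,1) + e (1,2,1) + e (1,1,2)) := by
  refine mem_C_of_forms (k₁ := 12) (k₂ := 12) (χ₁ := e (1,0,0)) (χ₂ := 0)
    (by norm_num) (by norm_num) ?_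
  intro t ht
  refine ⟨t,
    ⟨!![t⁻¹^3, 0; 0, t^3], by simp [Matrix.det_fin_two]; field_simp; (try ring_nf); (try simp only [inv_pow, inv_zpow, ← zpow_natCast, ← zpow_neg, ← zpow_add₀ ht]); (try norm_num); (try ring)⟩,
    ⟨!![t^4, 0, 0; 0, t⁻¹^2, 0; 0, 0, t⁻¹^2], by simp [Matrix.det_fin_three]; field_simp; (try ring_nf); (try simp only [inv_pow, inv_zpow, ← zpow_natCast, ← zpow_neg, ← zpow_add₀ ht]); (try norm_num); (try ring)⟩,
    ⟨!![t^4, 0, 0; 0, t⁻¹^2, 0; 0, 0, t⁻¹^2], by simp [Matrix.det_fin_three]; field_simp; (try ring_nf); (try simp only [inv_pow, inv_zpow, ← zpow_natCast, ← zpow_neg, ← zpow_add₀ ht]); (try norm_num); (try ring)⟩, ?_⟩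
  funext j
  obtain ⟨j1, j2, j3⟩ := j
  fin_cases j1 <;> fin_cases j2 <;> fin_cases j3
  all_goals simp [act233, e, Fintype.sum_prod_type, Fin.sum_univ_two, Fin.sum_univ_three,
    Prod.ext_iff, Matrix.cons_val_zero, Matrix.cons_val_one, Matrix.cons_val_two,
    Matrix.head_cons, Matrix.vecTail, Matrix.vecHead]
  all_goals try field_simp
  all_goals try ring_nf
  all_goals try simp only [inv_pow, inv_zpow, ← zpow_natCast, ← zpow_neg, ← zpow_add₀ ht]
  all_goals try norm_num
  all_goals try ring
  all_goals try tauto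

lemma mem_41 : (e (1,0,0) + e (0,1,0) + e (0,0,1) + e (1,2,1) + e (1,1,2)) ∈
    C (e (1,0,0) + e (0,1,0) + e (0,0,1) + e (1,2,2)) := by
  refine mem_C_of_forms (k₁ := 3) (k₂ := 2)
    (χ₁ := (-2 : ℂ) • e (0,2,2)) (χ₂ := (-3 : ℂ) • e (1,2,2))
    (by norm_num) (by norm_num) ?_
  intro t ht
  refine ⟨1,
    ⟨!![3*t^2, -(2/9)*t⁻¹; 3*t, (1/9)*t⁻¹^2], by simp [Matrix.det_fin_two]; field_simp; (try ring_nf); (try simp only [inv_pow, inv_zpow, ← zpow_natCast, ← zpow_neg, ← zpow_add₀ ht]); (try norm_num); (try ring)⟩,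
    ⟨!![9*t^4, 0, -(2/81)*t⁻¹^5; 9*t^3, 1, (1/81)*t⁻¹^6; -18*t^5, -4*t^2, (1/81)*t⁻¹^4], by simp [Matrix.det_fin_three]; field_simp; (try ring_nf); (try simp only [inv_pow, inv_zpow, ← zpow_natCast, ← zpow_neg, ← zpow_add₀ ht]); (try norm_num); (try ring)⟩,
    ⟨!![-(1/9)*t⁻¹^2, (2/81)*t⁻¹^5, -162*t^7;
        -(1/9)*t⁻¹^3, (1/81)*t⁻¹^6, 81*t^6;
        (2/9)*t⁻¹, 0, 81*t^8], by simp [Matrix.det_fin_three]; field_simp; (try ring_nf); (try simp only [inv_pow, inv_zpow, ← zpow_natCast, ← zpow_neg, ← zpow_add₀ ht]); (try norm_num); (try ring)⟩, ?_⟩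
  funext j
  obtain ⟨j1, j2, j3⟩ := j
  fin_cases j1 <;> fin_cases j2 <;> fin_cases j3
  all_goals simp [act233, e, Fintype.sum_prod_type, Fin.sum_univ_two, Fin.sum_univ_three,
    Prod.ext_iff, Matrix.cons_val_zero, Matrix.cons_val_one, Matrix.cons_val_two,
    Matrix.head_cons, Matrix.vecTail, Matrix.vecHead]
  all_goals try field_simp
  all_goals try ring_nf
  all_goals try simp only [inv_pow, inv_zpow, ← zpow_natCast, ← zpow_neg, ← zpow_add₀ ht]
  all_goals try norm_num
  all_goals try ring
  all_goals try tauto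

/-- Hierarchy of SLOCC orbit closures in the `2 × 3 × 3` system. -/
theorem hierarchy233 :
    C (e (1,0,0) + e (0,1,0) + e (0,2,2)) ⊆
      C (e (1,0,0) + e (0,1,0) + e (0,0,1) + e (0,2,2)) ∧
    C (e (1,0,0) + e (0,1,0) + e (0,0,1) + e (0,2,2)) ⊆
      C (e (1,0,0) + e (0,1,0) + e (0,0,1) + e (1,2,2)) ∧
    C (e (1,0,0) + e (0,1,0) + e (0,0,1) + e (1,2,2)) ⊆
      C (e (0,0,0) + e (1,1,1) + e (0,2,2) + e (1,2,2)) ∧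
    C (e (0,0,1) + e (0,1,0) + e (1,2,1) + e (1,1,2)) ⊆
      C (e (1,0,0) + e (0,1,0) + e (0,0,1) + e (1,2,1) + e (1,1,2)) ∧
    C (e (1,0,0) + e (0,1,0) + e (0,0,1) + e (1,2,1) + e (1,1,2)) ⊆
      C (e (0,0,0) + e (1,1,1) + e (0,2,2) + e (1,2,2)) := by
  refine ⟨C_mono mem_32, C_mono mem_21, C_mono mem_10, C_mono mem_54,
    C_mono (C_mono mem_10 mem_41)⟩
end

section
/- In the 2 × 3 × 3 system let ψ₀ = e(0,0,0) + e(1,1,1) + e(0,2,2) + e(1,2,2) and ψ₁ = e(1,0,0) + e(0,1,0) + e(0,0,1) + e(1,2,2). For real ε ≠ 0 let A(ε) be the 2 × 2 matrix with rows (1, −1) and (0, ε), and let B(ε) be the 3 × 3 matrix with rows (1, −1, 0), (0, ε, 0), (0, 0, 1). Then (1/ε) · ((A(ε) ⊗ B(ε) ⊗ B(ε)) applied to ψ₀) tends to ψ₁ as ε → 0 (along ε ≠ 0). Explicitly, (1/ε)(A(ε) ⊗ B(ε) ⊗ B(ε))ψ₀ = ψ₁ − ε·(e(1,1,0) + e(1,0,1)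 + e(0,1,1)) + ε²·e(1,1,1). -/
open scoped BigOperators

/-- The tensor product action of a triple of matrices on `2 × 3 × 3` states. -/
noncomputable def actM (g₁ : Matrix (Fin 2) (Fin 2) ℂ)
    (g₂ g₃ : Matrix (Fin 3) (Fin 3) ℂ)
    (ψ : Fin 2 × Fin 3 × Fin 3 → ℂ) : Fin 2 × Fin 3 × Fin 3 → ℂ :=
  fun j => ∑ m : Fin 2 × Fin 3 × Fin 3,
    g₁ j.1 m.1 * g₂ j.2.1 m.2.1 * g₃ j.2.2 m.2.2 * ψ m

/-- The `2 × 2` matrix with rows `(1, −1)` and `(0, ε)`. -/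
noncomputable def A (ε : ℝ) : Matrix (Fin 2) (Fin 2) ℂ :=
  !![1, -1; 0, (ε : ℂ)]

/-- The `3 × 3` matrix with rows `(1, −1, 0)`, `(0, ε, 0)`, `(0, 0, 1)`. -/
noncomputable def B (ε : ℝ) : Matrix (Fin 3) (Fin 3) ℂ :=
  !![1, -1, 0; 0, (ε : ℂ), 0; 0, 0, 1]

lemma actM_add (g₁ : Matrix (Fin 2) (Fin 2) ℂ) (g₂ g₃ : Matrix (Fin 3) (Fin 3) ℂ)
    (ψ φ : Fin 2 × Fin 3 × Fin 3 → ℂ) :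
    actM g₁ g₂ g₃ (ψ + φ) = actM g₁ g₂ g₃ ψ + actM g₁ g₂ g₃ φ := by
  funext j
  simp [actM, mul_add, Finset.sum_add_distrib]

lemma actM_e (g₁ : Matrix (Fin 2) (Fin 2) ℂ) (g₂ g₃ : Matrix (Fin 3) (Fin 3) ℂ)
    (j₀ : Fin 2 × Fin 3 × Fin 3) :
    actM g₁ g₂ g₃ (e j₀) =
      fun j => g₁ j.1 j₀.1 * g₂ j.2.1 j₀.2.1 * g₃ j.2.2 j₀.2.2 := by
  funext j
  rw [actM, Finset.sum_eq_single j₀] <;> simp [e] <;> tauto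

lemma key (ε : ℝ) (hε : ε ≠ 0) :
      (1 / (ε : ℂ)) •
          actM (A ε) (B ε) (B ε) (e (0,0,0) + e (1,1,1) + e (0,2,2) + e (1,2,2)) =
        e (1,0,0) + e (0,1,0) + e (0,0,1) + e (1,2,2)
          - (ε : ℂ) • (e (1,1,0) + e (1,0,1) + e (0,1,1))
          + (ε : ℂ) ^ 2 • e (1,1,1) := by
  have h : (ε : ℂ) ≠ 0 := Complex.ofReal_ne_zero.mpr hε
  rw [actM_add, actM_add, actM_add, actM_e, actM_e, actM_e, actM_e]
  funext j
  obtain ⟨j1, j2, j3⟩ := j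
  fin_cases j1 <;> fin_cases j2 <;> fin_cases j3 <;>
    (try simp [e, A, B, Prod.ext_iff, Matrix.vecHead, Matrix.vecTail]) <;> (try field_simp) <;> (try ring)

/-- The degeneration `(1/ε)(A(ε) ⊗ B(ε) ⊗ B(ε)) ψ₀ → ψ₁` as `ε → 0`, with the
explicit formula for each `ε ≠ 0`. -/
theorem psi0_degenerates_to_psi1 :
    Filter.Tendsto
      (fun ε : ℝ => (1 / (ε : ℂ)) •
        actM (A ε) (B ε) (B ε) (e (0,0,0) + e (1,1,1) + e (0,2,2) + e (1,2,2)))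
      (nhdsWithin 0 {ε : ℝ | ε ≠ 0})
      (nhds (e (1,0,0) + e (0,1,0) + e (0,0,1) + e (1,2,2))) ∧
    ∀ ε : ℝ, ε ≠ 0 →
      (1 / (ε : ℂ)) •
          actM (A ε) (B ε) (B ε) (e (0,0,0) + e (1,1,1) + e (0,2,2) + e (1,2,2)) =
        e (1,0,0) + e (0,1,0) + e (0,0,1) + e (1,2,2)
          - (ε : ℂ) • (e (1,1,0) + e (1,0,1) + e (0,1,1))
          + (ε : ℂ) ^ 2 • e (1,1,1) := by
  refine ⟨?_, key⟩
  have hg : Filter.Tendsto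
      (fun ε : ℝ => e (1,0,0) + e (0,1,0) + e (0,0,1) + e (1,2,2)
          - (ε : ℂ) • (e (1,1,0) + e (1,0,1) + e (0,1,1))
          + (ε : ℂ) ^ 2 • e (1,1,1))
      (nhdsWithin 0 {ε : ℝ | ε ≠ 0})
      (nhds (e (1,0,0) + e (0,1,0) + e (0,0,1) + e (1,2,2))) := by
    have hc : Continuous (fun ε : ℝ => e (1,0,0) + e (0,1,0) + e (0,0,1) + e (1,2,2)
          - (ε : ℂ) • (e (1,1,0) + e (1,0,1) + e (0,1,1))
          + (ε : ℂ) ^ 2 • e (1,1,1)) := by fun_prop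
    have := (hc.tendsto 0).mono_left (nhdsWithin_le_nhds (s := {ε : ℝ | ε ≠ 0}))
    simpa using this
  refine hg.congr' ?_
  filter_upwards [self_mem_nhdsWithin] with ε hε
  exact (key ε hε).symm
end

section
/- Let N, M be natural numbers and let ψ : (Fin N → Fin 2) → ℂ be a normalized N-qubit state such that every multi-index j in the support of ψ has at most M coordinates equal to 1 (card {i : j i = 1} ≤ M). Then ∑_{i ∈ Fin N} λ_max(ρ⁽ⁱ⁾(ψ)) ≥ N − M, where λ_max(ρ⁽ⁱ⁾(ψ)) is the largest eigenvalue of the i-th one-qubit reduced density matrix. -/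
open scoped BigOperators

/-- The `i`-th one-qubit reduced density matrix of an `N`-qubit state. -/
noncomputable def qrdm {N : ℕ} (ψ : (Fin N → Fin 2) → ℂ) (i : Fin N) :
    Matrix (Fin 2) (Fin 2) ℂ :=
  fun k l => ∑ j : Fin N → Fin 2,
    if j i = k then ψ j * (starRingEnd ℂ) (ψ (Function.update j i l)) else 0

/-!
The diagonal entry `ρ⁽ⁱ⁾₀₀` is the probability that qubit `i` is found in `0`, and any diagonal
entry of a Hermitian matrix is a convex combination of its eigenvalues, hence at most `λ_max`.
Summing over `i` counts, for each basis state `j`, its zeros with weight `|ψ j|²`; on the support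
there are at least `N - M` of them, and the weights sum to `1`.
-/

namespace Matrix

variable {𝕜 n : Type*} [RCLike 𝕜] [Fintype n] [DecidableEq n]

theorem hasEigenvalue_mulVecLin_ofReal_iff (A : Matrix n n 𝕜) (r : ℝ) :
    Module.End.HasEigenvalue A.mulVecLin (r : 𝕜) ↔ r ∈ spectrum ℝ A := by
  rw [← toLin'_apply', Module.End.hasEigenvalue_iff_mem_spectrum, spectrum_toLin',
    ← RCLike.algebraMap_eq_ofReal, spectrum.algebraMap_mem_iff]

theorem sum_norm_sq_apply_eq_one_of_mem_unitaryGroup {U : Matrix n n 𝕜}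
    (hU : U ∈ unitaryGroup n 𝕜) (k : n) : ∑ j, ‖U k j‖ ^ 2 = 1 := by
  have h := congrFun (congrFun (mem_unitaryGroup_iff.mp hU) k) k
  simp only [mul_apply, star_apply, ← starRingEnd_apply, RCLike.mul_conj, one_apply_eq] at h
  exact_mod_cast h

namespace IsHermitian

variable {A : Matrix n n 𝕜}

theorem re_apply_self_eq_sum_eigenvalues (hA : A.IsHermitian) (k : n) :
    RCLike.re (A k k) =
      ∑ j, hA.eigenvalues j * ‖(hA.eigenvectorUnitary : Matrix n n 𝕜) k j‖ ^ 2 := by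
  conv_lhs => rw [hA.spectral_theorem, Unitary.conjStarAlgAut_apply]
  simp only [mul_apply, diagonal_apply, mul_ite, mul_zero, Finset.sum_ite_eq', Finset.mem_univ,
    if_true, Function.comp_apply, star_apply, map_sum]
  refine Finset.sum_congr rfl fun j _ => ?_
  rw [mul_right_comm, ← starRingEnd_apply, RCLike.mul_conj, mul_comm]
  norm_cast

theorem re_apply_self_le_sSup_eigenvalues (hA : A.IsHermitian) (k : n) :
    RCLike.re (A k k) ≤ sSup {r : ℝ | Module.End.HasEigenvalue A.mulVecLin (r : 𝕜)} := by
  have hspec : {r : ℝ | Module.End.HasEigenvalue A.mulVecLin (r : 𝕜)} =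
      Set.range hA.eigenvalues := by
    ext r
    rw [Set.mem_ofPred_eq, hasEigenvalue_mulVecLin_ofReal_iff, hA.spectrum_real_eq_range_eigenvalues]
  set U := (hA.eigenvectorUnitary : Matrix n n 𝕜)
  rw [hspec, hA.re_apply_self_eq_sum_eigenvalues]
  calc ∑ j, hA.eigenvalues j * ‖U k j‖ ^ 2
      ≤ ∑ j, sSup (Set.range hA.eigenvalues) * ‖U k j‖ ^ 2 :=
        Finset.sum_le_sum fun j _ => mul_le_mul_of_nonneg_right
          (le_csSup (Set.finite_range _).bddAbove ⟨j, rfl⟩) (sq_nonneg _)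
    _ = sSup (Set.range hA.eigenvalues) := by
        rw [← Finset.mul_sum, sum_norm_sq_apply_eq_one_of_mem_unitaryGroup
          hA.eigenvectorUnitary.2, mul_one]

end IsHermitian

end Matrix

theorem card_filter_eq_zero_add_card_filter_eq_one {ι : Type*} [Fintype ι] (j : ι → Fin 2) :
    (Finset.univ.filter fun i => j i = 0).card + (Finset.univ.filter fun i => j i = 1).card =
      Fintype.card ι := by
  have hone : (Finset.univ.filter fun i => j i = 1) = Finset.univ.filter fun i => j i ≠ 0 :=
    Finset.filter_congr fun i _ => ⟨fun h => by simp [h], Fin.eq_one_of_ne_zero _⟩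
  rw [hone, Finset.card_filter_add_card_filter_not, Finset.card_univ]

theorem card_sub_le_card_filter_eq_zero {ι : Type*} [Fintype ι] {M : ℕ} (j : ι → Fin 2)
    (hM : (Finset.univ.filter fun i => j i = 1).card ≤ M) :
    (Fintype.card ι : ℝ) - M ≤ (Finset.univ.filter fun i => j i = 0).card := by
  have hM' : ((Finset.univ.filter fun i => j i = 1).card : ℝ) ≤ M := by exact_mod_cast hM
  rw [← card_filter_eq_zero_add_card_filter_eq_one j]
  push_cast
  linarith

section Qubits

variable {N : ℕ} (ψ : (Fin N → Fin 2) → ℂ)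

theorem qrdm_isHermitian (i : Fin N) : (qrdm ψ i).IsHermitian := by
  refine Matrix.IsHermitian.ext fun k l => ?_
  have hσ : Function.Involutive fun j : Fin N → Fin 2 =>
      Function.update j i (Equiv.swap k l (j i)) := fun j => by simp
  simp only [qrdm, star_sum]
  rw [← Equiv.sum_comp hσ.toPerm]
  refine Finset.sum_congr rfl fun j _ => ?_
  by_cases h : j i = k
  · subst h
    simp [mul_comm]
  · simp [h, Equiv.swap_apply_eq_iff]

theorem qrdm_apply_self (i : Fin N) (k : Fin 2) :
    qrdm ψ i k k = ∑ j, if j i = k then (‖ψ j‖ ^ 2 : ℂ) else 0 := by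
  refine Finset.sum_congr rfl fun j _ => ?_
  split_ifs with h
  · rw [← h, Function.update_eq_self, Complex.mul_conj, Complex.normSq_eq_norm_sq]
    push_cast
    rfl
  · rfl

theorem sum_re_qrdm_zero_zero :
    ∑ i, (qrdm ψ i 0 0).re =
      ∑ j, ‖ψ j‖ ^ 2 * ((Finset.univ.filter fun i => j i = 0).card : ℝ) := by
  simp only [qrdm_apply_self, Complex.re_sum, apply_ite Complex.re, Complex.zero_re]
  rw [Finset.sum_comm]
  refine Finset.sum_congr rfl fun j _ => ?_
  norm_cast
  rw [← Finset.sum_filter, Finset.sum_const, nsmul_eq_mul, mul_comm]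

end Qubits

/-- For a normalized `N`-qubit state supported on multi-indices with at most `M`
ones, the sum of the maximal local eigenvalues is at least `N − M`. -/
theorem sum_lmax_ge_of_support_weight_le (N M : ℕ) (ψ : (Fin N → Fin 2) → ℂ)
    (hnorm : ∑ j : Fin N → Fin 2, ‖ψ j‖ ^ 2 = 1)
    (hsupp : ∀ j : Fin N → Fin 2, ψ j ≠ 0 →
      (Finset.univ.filter fun i => j i = 1).card ≤ M) :
    (N : ℝ) - M ≤ ∑ i : Fin N, lmax (qrdm ψ i) := by
  calc (N : ℝ) - M = ∑ j, ‖ψ j‖ ^ 2 * ((N : ℝ) - M) := by rw [← Finset.sum_mul, hnorm, one_mul]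
    _ ≤ ∑ j, ‖ψ j‖ ^ 2 * ((Finset.univ.filter fun i => j i = 0).card : ℝ) := by
        refine Finset.sum_le_sum fun j _ => ?_
        by_cases hj : ψ j = 0
        · simp [hj]
        · refine mul_le_mul_of_nonneg_left ?_ (sq_nonneg _)
          simpa using card_sub_le_card_filter_eq_zero j (hsupp j hj)
    _ = ∑ i, (qrdm ψ i 0 0).re := (sum_re_qrdm_zero_zero ψ).symm
    _ ≤ ∑ i, lmax (qrdm ψ i) := Finset.sum_le_sum fun i _ =>
        (qrdm_isHermitian ψ i).re_apply_self_le_sSup_eigenvalues 0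
end
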